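/- Let M be a submodule of F[x]^q with minimal Gröbner basis G = {g_1, ..., g_m}, let ℓ ∈ {1,...,m}, and let P be a property of vectors in M possessed by g_ℓ but by no element of the span of {g_i : i ≠ ℓ}. Then among all elements of M with property P, g_ℓ has minimal leading monomial; moreover every element f of M with property P and minimal leading monomial has the form f = a_ℓ g_ℓ + Σ_{i≠ℓ} a_i g_i where a_ℓ is a nonzero scalar and each a_i ∈ F[x] satisfies lm(a_i g_i) ≤ lm(g_ℓ). -/

import Mathlib

open Polynomial

open scoped Classical

/-- Support of a polynomial vector: monomials `(degree, position)` ordered lexicographically,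
which is the term-over-position (top) ordering. -/
noncomputable def vsupp {R : Type*} [CommRing R] {q : ℕ} (f : Fin q → R[X]) :
    Finset (Lex (ℕ × Fin q)) :=
  Finset.univ.biUnion fun i => (f i).support.image fun α => toLex (α, i)

/-- Leading monomial w.r.t. the top ordering (`⊥` for the zero vector). -/
noncomputable def vlm {R : Type*} [CommRing R] {q : ℕ} (f : Fin q → R[X]) :
    WithBot (Lex (ℕ × Fin q)) := (vsupp f).max

/-- Degree of the leading monomial (junk value `0` for the zero vector). -/
noncomputable def vdeg {R : Type*} [CommRing R] {q : ℕ} (f : Fin q → R[X]) : ℕ :=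
  WithBot.unbotD 0 ((vlm f).map fun m => (ofLex m).1)

/-- Leading position. -/
noncomputable def vlpos {R : Type*} [CommRing R] {q : ℕ} (f : Fin q → R[X]) : WithBot (Fin q) :=
  (vlm f).map fun m => (ofLex m).2

/-- Leading coefficient. -/
noncomputable def vlc {R : Type*} [CommRing R] {q : ℕ} (f : Fin q → R[X]) : R :=
  WithBot.unbotD 0 ((vlm f).map fun m => (f (ofLex m).2).coeff (ofLex m).1)

/-- Leading term of a polynomial vector, as a polynomial vector. -/
noncomputable def vlt {R : Type*} [CommRing R] {q : ℕ} (f : Fin q → R[X]) : Fin q → R[X] :=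
  WithBot.unbotD 0 ((vlm f).map fun m => fun j : Fin q =>
    if j = (ofLex m).2 then C ((f (ofLex m).2).coeff (ofLex m).1) * X ^ (ofLex m).1 else 0)

/-- The leading term submodule `L(F)`. -/
noncomputable def ltSubmodule {R : Type*} [CommRing R] {q : ℕ} (S : Set (Fin q → R[X])) :
    Submodule R[X] (Fin q → R[X]) :=
  Submodule.span R[X] (vlt '' S)

/-- `G` is a Gröbner basis of `M`: `G ⊆ M` and `L(G) = L(M)`. -/
def IsGroebner {R : Type*} [CommRing R] {q : ℕ} (M : Submodule R[X] (Fin q → R[X]))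
    (G : Finset (Fin q → R[X])) : Prop :=
  (G : Set (Fin q → R[X])) ⊆ M ∧
    ltSubmodule (G : Set (Fin q → R[X])) = ltSubmodule (M : Set (Fin q → R[X]))

/-- One-step reduction of `f` to `h` modulo the finite set `Fs` (Adams–Loustaunau Def. 4.1.1). -/
def ReducesOneStep {R : Type*} [CommRing R] {q : ℕ} (Fs : Finset (Fin q → R[X]))
    (f h : Fin q → R[X]) : Prop :=
  f ≠ 0 ∧ ∃ (m : ℕ) (jv : Fin m → Fin q → R[X]) (α : Fin m → ℕ) (β : Fin m → R),
    0 < m ∧ (∀ i, jv i ∈ Fs) ∧ (∀ i, jv i ≠ 0) ∧ Function.Injective jv ∧ (∀ i, β i ≠ 0) ∧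
    (∀ i, vlm f = (vlm (jv i)).map fun mm => toLex (α i + (ofLex mm).1, (ofLex mm).2)) ∧
    vlt f = ∑ i, (C (β i) * X ^ α i) • vlt (jv i) ∧
    h = f - ∑ i, (C (β i) * X ^ α i) • jv i

/-- Minimal Gröbner basis: a Gröbner basis each of whose elements is irreducible
modulo the others. -/
def IsMinimalGroebner {R : Type*} [CommRing R] {q : ℕ} (M : Submodule R[X] (Fin q → R[X]))
    (G : Finset (Fin q → R[X])) : Prop :=
  IsGroebner M G ∧ ∀ g ∈ G, ∀ h, ¬ ReducesOneStep (G.erase g) g h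

/-!
Division by a Gröbner basis `G` gives every `f ∈ M` a standard representation
`f = ∑ aᵢ gᵢ` with `lm (aᵢ gᵢ) ≤ lm f`: the leading term of `f` lies in `L(G) = L(M)`, so
`lm f = x ^ k * lm gᵢ` for some `i`, and subtracting a monomial multiple of `gᵢ` lowers `lm f`.
If `f` has property `P`, then `a_ℓ ≠ 0` (otherwise `f` lies in the span of the other `gᵢ`), so
`lm g_ℓ ≤ lm (a_ℓ g_ℓ) ≤ lm f`. If moreover `lm f` is minimal, then `lm (a_ℓ g_ℓ) ≤ lm g_ℓ`
forces `deg a_ℓ = 0`.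
-/

section Monomial

variable {ι : Type*}

/-- `mshift k μ` is the monomial `x ^ k * μ`. -/
def mshift (k : ℕ) (μ : Lex (ℕ × ι)) : Lex (ℕ × ι) :=
  toLex (k + (ofLex μ).1, (ofLex μ).2)

@[simp]
lemma mshift_zero (μ : Lex (ℕ × ι)) : mshift 0 μ = μ := by
  simp [mshift]

lemma mshift_mshift (k l : ℕ) (μ : Lex (ℕ × ι)) : mshift k (mshift l μ) = mshift (k + l) μ := by
  simp [mshift, add_assoc]

variable [Preorder ι]

lemma mshift_le_mshift_left {k l : ℕ} (hkl : k ≤ l) (μ : Lex (ℕ × ι)) :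
    mshift k μ ≤ mshift l μ := by
  rcases hkl.lt_or_eq with h | rfl
  · exact Prod.Lex.toLex_le_toLex.2 (Or.inl (by simpa using h))
  · exact le_rfl

lemma mshift_monotone (k : ℕ) : Monotone (mshift (ι := ι) k) := by
  intro μ ν h
  rcases Prod.Lex.le_iff.1 h with h | ⟨h₁, h₂⟩
  · exact Prod.Lex.toLex_le_toLex.2 (Or.inl (by simpa [mshift] using h))
  · exact Prod.Lex.toLex_le_toLex.2 (Or.inr ⟨by simp [h₁], h₂⟩)

lemma le_mshift (k : ℕ) (μ : Lex (ℕ × ι)) : μ ≤ mshift k μ := by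
  simpa using mshift_le_mshift_left (Nat.zero_le k) μ

lemma mshift_le_self_iff {k : ℕ} {μ : Lex (ℕ × ι)} : mshift k μ ≤ μ ↔ k = 0 := by
  refine ⟨fun h => ?_, by rintro rfl; simp⟩
  rcases Prod.Lex.le_iff.1 h with h | ⟨h, -⟩ <;> simp [mshift] at h
  omega

end Monomial

section CommRing

variable {R : Type*} [CommRing R] {q : ℕ}

def vcoeff (f : Fin q → R[X]) (μ : Lex (ℕ × Fin q)) : R :=
  (f (ofLex μ).2).coeff (ofLex μ).1

lemma mem_vsupp_iff {f : Fin q → R[X]} {μ : Lex (ℕ × Fin q)} :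
    μ ∈ vsupp f ↔ vcoeff f μ ≠ 0 := by
  simp only [vsupp, Finset.mem_biUnion, Finset.mem_univ, true_and, Finset.mem_image,
    mem_support_iff, vcoeff]
  constructor
  · rintro ⟨j, n, hn, rfl⟩
    simpa using hn
  · intro h
    exact ⟨(ofLex μ).2, (ofLex μ).1, h, rfl⟩

lemma le_vlm {f : Fin q → R[X]} {μ : Lex (ℕ × Fin q)} (h : vcoeff f μ ≠ 0) :
    (μ : WithBot (Lex (ℕ × Fin q))) ≤ vlm f :=
  Finset.le_max (mem_vsupp_iff.2 h)

lemma vcoeff_ne_zero_of_vlm_eq {f : Fin q → R[X]} {μ : Lex (ℕ × Fin q)} (h : vlm f = μ) :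
    vcoeff f μ ≠ 0 :=
  mem_vsupp_iff.1 (Finset.mem_of_max h)

lemma vlm_le_iff {f : Fin q → R[X]} {c : WithBot (Lex (ℕ × Fin q))} :
    vlm f ≤ c ↔ ∀ μ, vcoeff f μ ≠ 0 → (μ : WithBot (Lex (ℕ × Fin q))) ≤ c :=
  ⟨fun h _ hμ => (le_vlm hμ).trans h, fun h => Finset.max_le fun μ hμ => h μ (mem_vsupp_iff.1 hμ)⟩

lemma vlm_lt_coe_iff {f : Fin q → R[X]} {ν : Lex (ℕ × Fin q)} :
    vlm f < ν ↔ ∀ μ, vcoeff f μ ≠ 0 → μ < ν := by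
  refine ⟨fun h μ hμ => WithBot.coe_lt_coe.1 ((le_vlm hμ).trans_lt h), fun h => ?_⟩
  rcases hf : vlm f with _ | μ
  · exact WithBot.bot_lt_coe ν
  · exact WithBot.coe_lt_coe.2 (h μ (vcoeff_ne_zero_of_vlm_eq hf))

lemma vlm_eq_bot_iff {f : Fin q → R[X]} : vlm f = ⊥ ↔ f = 0 := by
  rw [vlm, Finset.max_eq_bot, Finset.eq_empty_iff_forall_notMem]
  simp only [mem_vsupp_iff, not_not]
  constructor
  · intro h
    funext j
    ext n
    exact h (toLex (n, j))
  · rintro rfl μ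
    simp [vcoeff]

@[simp]
lemma vlm_zero : vlm (0 : Fin q → R[X]) = ⊥ :=
  vlm_eq_bot_iff.2 rfl

lemma vlm_add_le (f g : Fin q → R[X]) : vlm (f + g) ≤ max (vlm f) (vlm g) := by
  refine vlm_le_iff.2 fun μ hμ => ?_
  have : vcoeff f μ + vcoeff g μ ≠ 0 := hμ
  by_cases hf : vcoeff f μ = 0
  · exact (le_vlm (by simpa [hf] using this)).trans (le_max_right _ _)
  · exact (le_vlm hf).trans (le_max_left _ _)

lemma vcoeff_sub (f g : Fin q → R[X]) (μ : Lex (ℕ × Fin q)) :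
    vcoeff (f - g) μ = vcoeff f μ - vcoeff g μ :=
  coeff_sub _ _ _

lemma vlm_sub_lt_of_vcoeff_eq {f g : Fin q → R[X]} {ν : Lex (ℕ × Fin q)} (hf : vlm f ≤ ν)
    (hg : vlm g ≤ ν) (hfg : vcoeff f ν = vcoeff g ν) : vlm (f - g) < ν := by
  refine vlm_lt_coe_iff.2 fun μ hμ => lt_of_le_of_ne ?_ ?_
  · rw [vcoeff_sub] at hμ
    by_cases h : vcoeff f μ = 0
    · rw [h, zero_sub, neg_ne_zero] at hμ
      exact WithBot.coe_le_coe.1 ((le_vlm hμ).trans hg)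
    · exact WithBot.coe_le_coe.1 ((le_vlm h).trans hf)
  · rintro rfl
    exact hμ (by rw [vcoeff_sub, hfg, sub_self])

lemma vlt_eq_of_vlm_eq {f : Fin q → R[X]} {ν : Lex (ℕ × Fin q)} (h : vlm f = ν) :
    vlt f = fun j => if j = (ofLex ν).2 then C (vcoeff f ν) * X ^ (ofLex ν).1 else 0 := by
  rw [vlt, h]
  rfl

lemma vcoeff_vlt (f : Fin q → R[X]) (μ : Lex (ℕ × Fin q)) :
    vcoeff (vlt f) μ = if vlm f = μ then vcoeff f μ else 0 := by
  by_cases hbot : vlm f = ⊥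
  · have : vlt f = 0 := by rw [vlt, hbot]; rfl
    simp [this, hbot, vcoeff]
  obtain ⟨ν, hν⟩ := WithBot.ne_bot_iff_exists.1 hbot
  rw [vlt_eq_of_vlm_eq hν.symm, ← hν]
  simp only [WithBot.coe_inj]
  by_cases hμ : ν = μ
  · subst hμ
    simp [vcoeff]
  · have : (ofLex ν).2 = (ofLex μ).2 → (ofLex μ).1 ≠ (ofLex ν).1 := fun h₂ h₁ =>
      hμ (ofLex.injective (Prod.ext h₁.symm h₂))
    simp only [vcoeff, hμ, if_false]
    split_ifs with hj
    · simp [coeff_C_mul, coeff_X_pow, this hj.symm]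
    · simp

lemma natDegree_le_of_vlm_eq {f : Fin q → R[X]} {μ : Lex (ℕ × Fin q)} (h : vlm f = μ)
    (j : Fin q) : (f j).natDegree ≤ (ofLex μ).1 := by
  refine natDegree_le_iff_coeff_eq_zero.2 fun n hn => ?_
  by_contra hc
  have := WithBot.coe_le_coe.1 (h ▸ le_vlm (f := f) (μ := toLex (n, j)) hc)
  rcases Prod.Lex.le_iff.1 this with h' | ⟨h', -⟩ <;> simp at h' <;> omega

lemma exists_mshift_of_vcoeff_smul_ne_zero {p : R[X]} {f : Fin q → R[X]} {ν : Lex (ℕ × Fin q)}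
    (h : vcoeff (p • f) ν ≠ 0) :
    ∃ k μ, p.coeff k ≠ 0 ∧ vcoeff f μ ≠ 0 ∧ ν = mshift k μ := by
  rw [vcoeff, Pi.smul_apply, smul_eq_mul, coeff_mul] at h
  obtain ⟨⟨k, n⟩, hkn, hne⟩ := Finset.exists_ne_zero_of_sum_ne_zero h
  refine ⟨k, toLex (n, (ofLex ν).2), left_ne_zero_of_mul hne, right_ne_zero_of_mul hne, ?_⟩
  rw [Finset.HasAntidiagonal.mem_antidiagonal] at hkn
  simp [mshift, hkn]

lemma vcoeff_smul_mshift {p : R[X]} {f : Fin q → R[X]} {μ : Lex (ℕ × Fin q)} (hf : vlm f = μ)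
    {k : ℕ} (hp : p.natDegree ≤ k) : vcoeff (p • f) (mshift k μ) = p.coeff k * vcoeff f μ :=
  coeff_mul_add_eq_of_natDegree_le hp (natDegree_le_of_vlm_eq hf _)

lemma vlm_smul_le {p : R[X]} {k : ℕ} (hp : p.natDegree ≤ k) (f : Fin q → R[X]) :
    vlm (p • f) ≤ (vlm f).map (mshift k) := by
  refine vlm_le_iff.2 fun ν hν => ?_
  obtain ⟨l, μ, hl, hμ, rfl⟩ := exists_mshift_of_vcoeff_smul_ne_zero hν
  obtain ⟨μ', hf, hμμ'⟩ := WithBot.coe_le_iff.1 (le_vlm hμ)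
  rw [hf, WithBot.map_coe, WithBot.coe_le_coe]
  exact (mshift_le_mshift_left ((le_natDegree_of_ne_zero hl).trans hp) μ).trans
    (mshift_monotone k hμμ')

lemma exists_vlm_eq_mshift_of_mem_ltSubmodule {S : Set (Fin q → R[X])} {v : Fin q → R[X]}
    (hv : v ∈ ltSubmodule S) {ν : Lex (ℕ × Fin q)} (hν : vcoeff v ν ≠ 0) :
    ∃ g ∈ S, ∃ (k : ℕ) (μ : Lex (ℕ × Fin q)), vlm g = μ ∧ ν = mshift k μ := by
  induction hv using Submodule.span_induction generalizing ν with
  | mem x hx =>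
    obtain ⟨g, hg, rfl⟩ := hx
    rw [vcoeff_vlt] at hν
    exact ⟨g, hg, 0, ν, by by_contra h; simp [h] at hν, by simp⟩
  | zero => simp [vcoeff] at hν
  | add x y _ _ hx hy =>
    have hxy : vcoeff x ν + vcoeff y ν ≠ 0 := hν
    by_cases h : vcoeff x ν = 0
    · exact hy (by simpa [h] using hxy)
    · exact hx h
  | smul p x _ hx =>
    obtain ⟨k, μ, -, hμ, rfl⟩ := exists_mshift_of_vcoeff_smul_ne_zero hν
    obtain ⟨g, hg, l, μ', hg', rfl⟩ := hx hμ
    exact ⟨g, hg, k + l, μ', hg', mshift_mshift k l μ'⟩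

lemma IsGroebner.exists_vlm_eq_mshift {M : Submodule R[X] (Fin q → R[X])}
    {G : Finset (Fin q → R[X])} (hG : IsGroebner M G) {f : Fin q → R[X]} (hf : f ∈ M)
    (hf0 : f ≠ 0) : ∃ g ∈ G, ∃ (k : ℕ) (μ : Lex (ℕ × Fin q)), vlm g = μ ∧ vlm f = mshift k μ := by
  obtain ⟨ν, hν⟩ := WithBot.ne_bot_iff_exists.1 (mt vlm_eq_bot_iff.1 hf0)
  have hlt : vlt f ∈ ltSubmodule (G : Set (Fin q → R[X])) :=
    hG.2 ▸ Submodule.subset_span ⟨f, hf, rfl⟩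
  have hν' : vcoeff (vlt f) ν ≠ 0 := by
    rw [vcoeff_vlt, if_pos hν.symm]
    exact vcoeff_ne_zero_of_vlm_eq hν.symm
  obtain ⟨g, hg, k, μ, hgμ, rfl⟩ := exists_vlm_eq_mshift_of_mem_ltSubmodule hlt hν'
  exact ⟨g, hg, k, μ, hgμ, hν.symm⟩

end CommRing

section Domain

variable {R : Type*} [CommRing R] [IsDomain R] {q : ℕ}

lemma vlm_smul {p : R[X]} (hp : p ≠ 0) (f : Fin q → R[X]) :
    vlm (p • f) = (vlm f).map (mshift p.natDegree) := by
  refine le_antisymm (vlm_smul_le le_rfl f) ?_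
  rcases hf : vlm f with _ | μ
  · exact bot_le
  · refine le_vlm ?_
    rw [vcoeff_smul_mshift hf le_rfl]
    exact mul_ne_zero (leadingCoeff_ne_zero.2 hp) (vcoeff_ne_zero_of_vlm_eq hf)

lemma vlm_le_vlm_smul {p : R[X]} (hp : p ≠ 0) (f : Fin q → R[X]) : vlm f ≤ vlm (p • f) := by
  rw [vlm_smul hp]
  rcases vlm f with _ | μ
  · exact bot_le
  · exact WithBot.coe_le_coe.2 (le_mshift _ μ)

lemma natDegree_eq_zero_of_vlm_smul_le {p : R[X]} (hp : p ≠ 0) {f : Fin q → R[X]} (hf : f ≠ 0)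
    (h : vlm (p • f) ≤ vlm f) : p.natDegree = 0 := by
  rw [vlm_smul hp] at h
  obtain ⟨μ, hμ⟩ := WithBot.ne_bot_iff_exists.1 (mt vlm_eq_bot_iff.1 hf)
  rw [← hμ, WithBot.map_coe, WithBot.coe_le_coe] at h
  exact mshift_le_self_iff.1 h

end Domain

section Field

variable {F : Type*} [Field F] {q : ℕ}

lemma vlm_sub_smul_lt {f g : Fin q → F[X]} {μ : Lex (ℕ × Fin q)} {k : ℕ} (hg : vlm g = μ)
    (hf : vlm f = mshift k μ) :
    vlm (f - (C (vcoeff f (mshift k μ) / vcoeff g μ) * X ^ k) • g) < mshift k μ := by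
  have hdeg := natDegree_C_mul_X_pow_le (vcoeff f (mshift k μ) / vcoeff g μ) k
  refine vlm_sub_lt_of_vcoeff_eq hf.le ?_ ?_
  · simpa [hg] using vlm_smul_le hdeg g
  · rw [vcoeff_smul_mshift hg hdeg, coeff_C_mul_X_pow, if_pos rfl,
      div_mul_cancel₀ _ (vcoeff_ne_zero_of_vlm_eq hg)]

theorem IsGroebner.exists_sum_smul_of_mem {m : ℕ} {M : Submodule F[X] (Fin q → F[X])}
    {g : Fin m → Fin q → F[X]} (hG : IsGroebner M (Finset.univ.image g)) {f : Fin q → F[X]}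
    (hf : f ∈ M) : ∃ a : Fin m → F[X], (∀ i, vlm (a i • g i) ≤ vlm f) ∧ f = ∑ i, a i • g i := by
  induction hfμ : vlm f using WellFoundedLT.induction generalizing f with
  | ind ν ih =>
  subst hfμ
  by_cases hf0 : f = 0
  · exact ⟨0, fun i => by simp [hf0], by simp [hf0]⟩
  obtain ⟨_, hgi, k, μ, hg, hfμ⟩ := hG.exists_vlm_eq_mshift hf hf0
  obtain ⟨i, -, rfl⟩ := Finset.mem_image.1 hgi
  set t := C (vcoeff f (mshift k μ) / vcoeff (g i) μ) * X ^ k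
  have hgM : g i ∈ M := hG.1 (by simp)
  have hlt : vlm (f - t • g i) < vlm f := hfμ ▸ vlm_sub_smul_lt hg hfμ
  have ht : vlm (t • g i) ≤ vlm f := by
    simpa [hg, hfμ] using vlm_smul_le (natDegree_C_mul_X_pow_le _ k) (g i)
  obtain ⟨a, ha, hsum⟩ := ih _ hlt (M.sub_mem hf (M.smul_mem t hgM)) rfl
  refine ⟨a + Pi.single i t, fun j => ?_, ?_⟩
  · rw [Pi.add_apply, add_smul]
    refine (vlm_add_le _ _).trans (max_le ((ha j).trans hlt.le) ?_)
    rcases eq_or_ne j i with rfl | hji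
    · simpa using ht
    · simp [hji]
  · simp only [Pi.add_apply, add_smul, Finset.sum_add_distrib, ← hsum, Pi.single_apply,
      ite_smul, zero_smul, Finset.sum_ite_eq', Finset.mem_univ, if_true, sub_add_cancel]

end Field

lemma sum_smul_mem_span_image_ne {R M ι : Type*} [Semiring R] [AddCommMonoid M] [Module R M]
    [Fintype ι] {g : ι → M} {a : ι → R} {ℓ : ι} (h : a ℓ = 0) :
    ∑ i, a i • g i ∈ Submodule.span R (g '' {i | i ≠ ℓ}) := by
  refine Submodule.sum_mem _ fun i _ => ?_
  rcases eq_or_ne i ℓ with rfl | hi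
  · simp [h]
  · exact Submodule.smul_mem _ _ (Submodule.subset_span ⟨i, hi, rfl⟩)

theorem minimal_with_property_param_general {F : Type*} [Field F] {q m : ℕ}
    (M : Submodule (Polynomial F) (Fin q → Polynomial F))
    (g : Fin m → Fin q → Polynomial F)
    (hGB : IsMinimalGroebner M (Finset.image g Finset.univ))
    (P : (Fin q → Polynomial F) → Prop) (ℓ : Fin m)
    (hPg : P (g ℓ))
    (hPnot : ∀ f ∈ Submodule.span (Polynomial F) (g '' {i : Fin m | i ≠ ℓ}), ¬ P f) :
    (∀ f ∈ M, P f → vlm (g ℓ) ≤ vlm f) ∧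
    (∀ f ∈ M, P f → (∀ f' ∈ M, P f' → vlm f ≤ vlm f') →
      ∃ (aℓ : F) (a : Fin m → Polynomial F), aℓ ≠ 0 ∧
        (∀ i, i ≠ ℓ → vlm (a i • g i) ≤ vlm (g ℓ)) ∧
        f = (C aℓ) • g ℓ + ∑ i ∈ Finset.univ.filter (· ≠ ℓ), a i • g i) := by
  have hG := hGB.1
  have hgℓ : g ℓ ≠ 0 := fun h => hPnot 0 (Submodule.zero_mem _) (h ▸ hPg)
  have hrepr : ∀ f ∈ M, P f → ∃ a : Fin m → F[X],
      a ℓ ≠ 0 ∧ (∀ i, vlm (a i • g i) ≤ vlm f) ∧ f = ∑ i, a i • g i := by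
    intro f hf hPf
    obtain ⟨a, ha, rfl⟩ := hG.exists_sum_smul_of_mem hf
    exact ⟨a, fun h0 => hPnot _ (sum_smul_mem_span_image_ne h0) hPf, ha, rfl⟩
  have hmin : ∀ f ∈ M, P f → vlm (g ℓ) ≤ vlm f := fun f hf hPf => by
    obtain ⟨a, haℓ, ha, -⟩ := hrepr f hf hPf
    exact (vlm_le_vlm_smul haℓ _).trans (ha ℓ)
  refine ⟨hmin, fun f hf hPf hfmin => ?_⟩
  have heq : vlm f = vlm (g ℓ) := le_antisymm (hfmin _ (hG.1 (by simp)) hPg) (hmin f hf hPf)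
  obtain ⟨a, haℓ, ha, rfl⟩ := hrepr f hf hPf
  have hC : a ℓ = C ((a ℓ).coeff 0) :=
    eq_C_of_natDegree_eq_zero (natDegree_eq_zero_of_vlm_smul_le haℓ hgℓ (heq ▸ ha ℓ))
  refine ⟨(a ℓ).coeff 0, a, fun h0 => haℓ (by rw [hC, h0, map_zero]),
    fun i _ => heq ▸ ha i, ?_⟩
  rw [← hC, Finset.filter_ne']
  exact (Finset.add_sum_erase _ (fun i => a i • g i) (Finset.mem_univ ℓ)).symm

/-- Let `G = {g_1,…,g_m}` be a minimal Gröbner basis of `M ⊆ F[x]^q`, and let `P` be a property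
possessed by `g_ℓ` but by no element of the span of the remaining basis vectors. Then `g_ℓ` has
minimal leading monomial among all elements of `M` with property `P`, and every minimal such `f`
has the form `f = a_ℓ g_ℓ + ∑_{i ≠ ℓ} a_i g_i` with `a_ℓ` a nonzero scalar and
`lm (a_i g_i) ≤ lm (g_ℓ)` for `i ≠ ℓ`. -/
theorem minimal_with_property_param {F : Type*} [Field F] {q m : ℕ}
    (M : Submodule (Polynomial F) (Fin q → Polynomial F))
    (g : Fin m → Fin q → Polynomial F) (hginj : Function.Injective g)
    (hGB : IsMinimalGroebner M (Finset.image g Finset.univ))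
    (P : (Fin q → Polynomial F) → Prop) (ℓ : Fin m)
    (hPg : P (g ℓ))
    (hPnot : ∀ f ∈ Submodule.span (Polynomial F) (g '' {i : Fin m | i ≠ ℓ}), ¬ P f) :
    (∀ f ∈ M, P f → vlm (g ℓ) ≤ vlm f) ∧
    (∀ f ∈ M, P f → (∀ f' ∈ M, P f' → vlm f ≤ vlm f') →
      ∃ (aℓ : F) (a : Fin m → Polynomial F), aℓ ≠ 0 ∧
        (∀ i, i ≠ ℓ → vlm (a i • g i) ≤ vlm (g ℓ)) ∧
        f = (C aℓ) • g ℓ + ∑ i ∈ Finset.univ.filter (· ≠ ℓ), a i • g i) :=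
  minimal_with_property_param_general M g hGB P ℓ hPg hPnot
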